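/- Let $I$ be a compact interval and $f, g : I \to \mathbb{R}$ be continuous and strictly monotone. Then the function $d_{f,g}(t) := \sup \{ |\mathscr{A}_f(\mathbb{P}) - \mathscr{A}_g(\mathbb{P})| : \mathbb{P} \in \mathcal{P}(I), |\gamma(\mathbb{P})| \le t \}$ is continuous on $(0, |I|]$. -/

import Mathlib

open MeasureTheory Set Filter Topology

noncomputable section

/-- The topological support of a Borel measure on `ℝ`. -/
def msupp (mu : Measure ℝ) : Set ℝ := {x | ∀ ε > 0, 0 < mu (Metric.ball x ε)}

/-- Infimum of the support. -/
def suppInf (mu : Measure ℝ) : ℝ := sInf (msupp mu)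

/-- Supremum of the support. -/
def suppSup (mu : Measure ℝ) : ℝ := sSup (msupp mu)

/-- `γ(P) = [inf supp P, sup supp P]`. -/
def gammaSet (mu : Measure ℝ) : Set ℝ := Icc (suppInf mu) (suppSup mu)

/-- `|γ(P)|`, the diameter of the support. -/
def gammaLen (mu : Measure ℝ) : ℝ := suppSup mu - suppInf mu

/-- `P ∈ 𝒫(I)`: a compactly supported Borel probability measure concentrated on `I`. -/
def IsCSP (I : Set ℝ) (mu : Measure ℝ) : Prop :=
  IsProbabilityMeasure mu ∧ mu Iᶜ = 0 ∧ IsCompact (closure (msupp mu))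

/-- `f ∈ CM(I)`: continuous and strictly monotone on `I`. -/
def CM (f : ℝ → ℝ) (I : Set ℝ) : Prop :=
  ContinuousOn f I ∧ (StrictMonoOn f I ∨ StrictAntiOn f I)

/-- The integral quasiarithmetic mean `𝒜_f(P) = f⁻¹(∫ f dP)` (inverse taken on `I`). -/
def QAM (f : ℝ → ℝ) (I : Set ℝ) (mu : Measure ℝ) : ℝ :=
  Function.invFunOn f I (∫ t, f t ∂mu)

/-- The Lebesgue σ-algebra on `ℝ` (completion of the Borel σ-algebra w.r.t. Lebesgue measure). -/
def Leb : MeasurableSpace ℝ where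
  MeasurableSet' s := NullMeasurableSet s (volume : Measure ℝ)
  measurableSet_empty := MeasurableSet.empty.nullMeasurableSet
  measurableSet_compl := fun _ hs => hs.compl
  measurableSet_iUnion := fun _ hf => NullMeasurableSet.iUnion hf

/-- An admissible family `(f_x)_{x∈[0,1]}`: each `f_x` continuous and strictly monotone on `I`,
and `(t,x) ↦ f_x(t)` measurable w.r.t. the product of the Borel σ-algebra and the
Lebesgue σ-algebra. -/
def Admissible (F : ℝ → ℝ → ℝ) (I : Set ℝ) : Prop :=
  (∀ x ∈ Icc (0:ℝ) 1, CM (F x) I) ∧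
  Measurable[(inferInstance : MeasurableSpace ℝ).prod Leb] (fun p : ℝ × ℝ => F p.2 p.1)

/-- `𝐀_𝓕(P)`: the distribution of `x ↦ 𝒜_{f_x}(P)` under Lebesgue measure on `[0,1]`. -/
def AF (F : ℝ → ℝ → ℝ) (I : Set ℝ) (mu : Measure ℝ) : Measure ℝ :=
  Measure.map (fun x => QAM (F x) I mu) ((volume : Measure ℝ).restrict (Icc 0 1))

/-- Iterates of `𝐀_𝓕`. -/
def AFiter (F : ℝ → ℝ → ℝ) (I : Set ℝ) (n : ℕ) (mu : Measure ℝ) : Measure ℝ :=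
  (AF F I)^[n] mu

/-- A mean on `𝒫(I)`: `M(P) ∈ γ(P)`. -/
def IsMean (I : Set ℝ) (M : Measure ℝ → ℝ) : Prop :=
  ∀ mu : Measure ℝ, IsCSP I mu → M mu ∈ gammaSet mu

/-- `M` is `𝐀_𝓕`-invariant: `M ∘ 𝐀_𝓕 = M` on `𝒫(I)`. -/
def IsInvariantMean (F : ℝ → ℝ → ℝ) (I : Set ℝ) (M : Measure ℝ → ℝ) : Prop :=
  ∀ mu : Measure ℝ, IsCSP I mu → M (AF F I mu) = M mu

/-- The lower invariant mean `𝓛_𝓕`. -/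
def LF (F : ℝ → ℝ → ℝ) (I : Set ℝ) (mu : Measure ℝ) : ℝ :=
  ⨆ n, suppInf (AFiter F I n mu)

/-- The upper invariant mean `𝓤_𝓕`. -/
def UF (F : ℝ → ℝ → ℝ) (I : Set ℝ) (mu : Measure ℝ) : ℝ :=
  ⨅ n, suppSup (AFiter F I n mu)

/-- Variance of a measure on `ℝ`. -/
def Var (mu : Measure ℝ) : ℝ := (∫ x, x ^ 2 ∂mu) - (∫ x, x ∂mu) ^ 2

/-- The two-point measure `θ·δ_x + (1-θ)·δ_y`. -/
def twoPt (x y θ : ℝ) : Measure ℝ :=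
  ENNReal.ofReal θ • Measure.dirac x + ENNReal.ofReal (1 - θ) • Measure.dirac y

/-!
Any `μ ∈ 𝒫(I)` with `|γ(μ)| ≤ s` can be pushed forward by `x ↦ min x (inf γ(μ) + t)` to a
measure with `|γ| ≤ t`, moving each point by at most `s - t`. Since `f` and `f⁻¹` are uniformly
continuous on the compact sets `I` and `f(I)`, such a small transport changes `𝒜_f` and `𝒜_g`
only a little, uniformly in `μ`. Hence `d_{f,g}(s) ≤ d_{f,g}(t) + ε` whenever `t ≤ s < t + δ`;
together with monotonicity this makes `d_{f,g}` uniformly continuous.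
-/

open Function

theorem continuousOn_invFunOn_image {X Y : Type*} [TopologicalSpace X] [Nonempty X]
    [TopologicalSpace Y] [T2Space Y] {f : X → Y} {K : Set X} (hK : IsCompact K)
    (hf : ContinuousOn f K) (hinj : InjOn f K) : ContinuousOn (invFunOn f K) (f '' K) := by
  rw [continuousOn_iff_isClosed]
  intro t ht
  refine ⟨f '' (K ∩ t), ((hK.inter_right ht).image_of_continuousOn
    (hf.mono inter_subset_left)).isClosed, ?_⟩
  ext y
  constructor
  · rintro ⟨hy, x, hx, rfl⟩
    rw [mem_preimage, hinj.leftInvOn_invFunOn hx] at hy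
    exact ⟨⟨x, ⟨hx, hy⟩, rfl⟩, x, hx, rfl⟩
  · rintro ⟨⟨x, ⟨hx, hxt⟩, rfl⟩, -⟩
    exact ⟨by rwa [mem_preimage, hinj.leftInvOn_invFunOn hx], x, hx, rfl⟩

theorem MonotoneOn.uniformContinuousOn_of_le_add {D : ℝ → ℝ} {s : Set ℝ} (hD : MonotoneOn D s)
    (h : ∀ ε > 0, ∃ δ > 0, ∀ x ∈ s, ∀ y ∈ s, x ≤ y → y - x < δ → D y ≤ D x + ε) :
    UniformContinuousOn D s := by
  rw [Metric.uniformContinuousOn_iff]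
  intro ε hε
  obtain ⟨δ, hδ, hD'⟩ := h (ε / 2) (half_pos hε)
  refine ⟨δ, hδ, fun x hx y hy hxy => ?_⟩
  rw [Real.dist_eq, abs_sub_lt_iff] at hxy ⊢
  rcases le_total x y with hle | hle
  · have := hD' x hx y hy hle (by linarith)
    constructor <;> linarith [hD hx hy hle]
  · have := hD' y hy x hx hle (by linarith)
    constructor <;> linarith [hD hy hx hle]

section Support

variable {μ : Measure ℝ}

theorem msupp_compl_null (μ : Measure ℝ) : μ (msupp μ)ᶜ = 0 := by
  refine measure_null_of_locally_null _ fun x hx => ?_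
  simp only [msupp, mem_compl_iff, mem_ofPred_eq, not_forall, not_lt, nonpos_iff_eq_zero] at hx
  obtain ⟨ε, hε, h⟩ := hx
  exact ⟨Metric.ball x ε, mem_nhdsWithin_of_mem_nhds (Metric.ball_mem_nhds x hε), h⟩

theorem msupp_subset_of_ae_mem {K : Set ℝ} (hK : IsClosed K) (h : ∀ᵐ x ∂μ, x ∈ K) :
    msupp μ ⊆ K := by
  intro x hx
  by_contra hxK
  obtain ⟨ε, hε, hball⟩ := Metric.isOpen_iff.mp hK.isOpen_compl x hxK
  exact (hx ε hε).ne' (measure_mono_null hball h)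

theorem msupp_nonempty [IsProbabilityMeasure μ] : (msupp μ).Nonempty := by
  rw [nonempty_iff_ne_empty]
  intro h
  simpa [h] using msupp_compl_null μ

variable {c d : ℝ}

theorem le_suppInf_of_ae_mem [IsProbabilityMeasure μ] (h : ∀ᵐ x ∂μ, x ∈ Icc c d) :
    c ≤ suppInf μ :=
  le_csInf msupp_nonempty fun _ hx => (msupp_subset_of_ae_mem isClosed_Icc h hx).1

theorem suppSup_le_of_ae_mem [IsProbabilityMeasure μ] (h : ∀ᵐ x ∂μ, x ∈ Icc c d) :
    suppSup μ ≤ d :=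
  csSup_le msupp_nonempty fun _ hx => (msupp_subset_of_ae_mem isClosed_Icc h hx).2

theorem gammaLen_le_of_ae_mem [IsProbabilityMeasure μ] (h : ∀ᵐ x ∂μ, x ∈ Icc c d) :
    gammaLen μ ≤ d - c :=
  sub_le_sub (suppSup_le_of_ae_mem h) (le_suppInf_of_ae_mem h)

theorem ae_mem_gammaSet (h : ∀ᵐ x ∂μ, x ∈ Icc c d) : ∀ᵐ x ∂μ, x ∈ gammaSet μ := by
  have hK := msupp_subset_of_ae_mem isClosed_Icc h
  refine measure_mono_null (compl_subset_compl.2 fun x hx => ?_) (msupp_compl_null μ)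
  exact ⟨csInf_le ⟨c, fun y hy => (hK hy).1⟩ hx, le_csSup ⟨d, fun y hy => (hK hy).2⟩ hx⟩

theorem IsCSP.of_ae_mem [IsProbabilityMeasure μ] (h : ∀ᵐ x ∂μ, x ∈ Icc c d) :
    IsCSP (Icc c d) μ :=
  ⟨inferInstance, h, isCompact_Icc.of_isClosed_subset isClosed_closure
    (closure_minimal (msupp_subset_of_ae_mem isClosed_Icc h) isClosed_Icc)⟩

end Support

theorem CM.injOn {f : ℝ → ℝ} {I : Set ℝ} (hf : CM f I) : InjOn f I :=
  hf.2.elim StrictMonoOn.injOn StrictAntiOn.injOn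

section Integral

variable {μ : Measure ℝ} {f : ℝ → ℝ}

theorem integrable_of_ae_mem [IsFiniteMeasure μ] {K : Set ℝ} (hK : IsCompact K)
    (hf : ContinuousOn f K) (h : ∀ᵐ x ∂μ, x ∈ K) : Integrable f μ := by
  obtain ⟨C, hC⟩ := (hK.image_of_continuousOn hf).isBounded.exists_norm_le
  have hmeas := hf.aestronglyMeasurable (μ := μ) hK.isClosed.measurableSet
  rw [Measure.restrict_eq_self_of_ae_mem h] at hmeas
  exact .of_bound hmeas C (h.mono fun x hx => hC _ (mem_image_of_mem f hx))

theorem integral_mem_image [IsProbabilityMeasure μ] {a b : ℝ} (hf : ContinuousOn f (Icc a b))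
    (h : ∀ᵐ x ∂μ, x ∈ Icc a b) : ∫ x, f x ∂μ ∈ f '' Icc a b :=
  (isPreconnected_Icc.image f hf).convex.integral_mem
    (isCompact_Icc.image_of_continuousOn hf).isClosed
    (h.mono fun _ hx => mem_image_of_mem f hx) (integrable_of_ae_mem isCompact_Icc hf h)

theorem dist_integral_map_le [IsProbabilityMeasure μ] {K : Set ℝ} (hK : IsCompact K)
    (hf : ContinuousOn f K) {φ : ℝ → ℝ} (hφ : Measurable φ) {η : ℝ}
    (h : ∀ᵐ x ∂μ, x ∈ K ∧ φ x ∈ K ∧ dist (f (φ x)) (f x) ≤ η) :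
    dist (∫ y, f y ∂μ.map φ) (∫ x, f x ∂μ) ≤ η := by
  have hmapK : ∀ᵐ y ∂μ.map φ, y ∈ K :=
    (ae_map_iff hφ.aemeasurable hK.isClosed.measurableSet).2 (h.mono fun x hx => hx.2.1)
  have hint := integrable_of_ae_mem hK hf hmapK
  rw [integral_map hφ.aemeasurable hint.aestronglyMeasurable, dist_eq_norm,
    ← integral_sub (f := fun x => f (φ x)) (hint.comp_measurable hφ) (integrable_of_ae_mem hK hf (h.mono fun x hx => hx.1))]
  simpa using norm_integral_le_of_norm_le_const (μ := μ) (f := fun x => f (φ x) - f x)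
    (h.mono fun x hx => by rw [← dist_eq_norm]; exact hx.2.2)

end Integral

section QuasiArithmeticMean

variable {a b : ℝ} {f : ℝ → ℝ} {μ : Measure ℝ}

theorem QAM_mem (hf : ContinuousOn f (Icc a b)) (hμ : IsCSP (Icc a b) μ) :
    QAM f (Icc a b) μ ∈ Icc a b :=
  have := hμ.1
  invFunOn_mem (integral_mem_image hf hμ.2.1)

theorem exists_dist_QAM_map_lt (hf : ContinuousOn f (Icc a b)) (hinj : InjOn f (Icc a b))
    {ε : ℝ} (hε : 0 < ε) :
    ∃ δ > 0, ∀ (μ : Measure ℝ) [IsProbabilityMeasure μ] (φ : ℝ → ℝ), Measurable φ →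
      (∀ᵐ x ∂μ, x ∈ Icc a b ∧ φ x ∈ Icc a b ∧ dist (φ x) x < δ) →
      dist (QAM f (Icc a b) (μ.map φ)) (QAM f (Icc a b) μ) < ε := by
  obtain ⟨η, hη, hinv⟩ := Metric.uniformContinuousOn_iff.1
    ((isCompact_Icc.image_of_continuousOn hf).uniformContinuousOn_of_continuous
      (continuousOn_invFunOn_image isCompact_Icc hf hinj)) ε hε
  obtain ⟨δ, hδ, hfδ⟩ := Metric.uniformContinuousOn_iff.1
    (isCompact_Icc.uniformContinuousOn_of_continuous hf) (η / 2) (half_pos hη)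
  refine ⟨δ, hδ, fun μ _ φ hφ h => ?_⟩
  have := Measure.isProbabilityMeasure_map (μ := μ) hφ.aemeasurable
  refine hinv _ (integral_mem_image hf ?_) _ (integral_mem_image hf (h.mono fun x hx => hx.1)) ?_
  · exact (ae_map_iff hφ.aemeasurable measurableSet_Icc).2 (h.mono fun x hx => hx.2.1)
  · refine (dist_integral_map_le isCompact_Icc hf hφ (h.mono ?_)).trans_lt (half_lt_self hη)
    rintro x ⟨hx, hφx, hd⟩
    exact ⟨hx, hφx, (hfδ _ hφx _ hx hd).le⟩

theorem exists_map_gammaLen_le (hμ : IsCSP (Icc a b) μ) {s t : ℝ} (ht : 0 ≤ t) (hts : t ≤ s)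
    (hs : gammaLen μ ≤ s) :
    ∃ φ : ℝ → ℝ, Measurable φ ∧ IsCSP (Icc a b) (μ.map φ) ∧ gammaLen (μ.map φ) ≤ t ∧
      ∀ᵐ x ∂μ, x ∈ Icc a b ∧ φ x ∈ Icc a b ∧ dist (φ x) x ≤ s - t := by
  have := hμ.1
  have hI : ∀ᵐ x ∂μ, x ∈ Icc a b := hμ.2.1
  have hac : a ≤ suppInf μ := le_suppInf_of_ae_mem hI
  set c := suppInf μ
  set φ : ℝ → ℝ := fun x => min x (c + t)
  have hφ : Measurable φ := by fun_prop
  have := Measure.isProbabilityMeasure_map (μ := μ) hφ.aemeasurable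
  have hmove : ∀ᵐ x ∂μ, x ∈ Icc a b ∧ φ x ∈ Icc a b ∩ Icc c (c + t) ∧ dist (φ x) x ≤ s - t := by
    filter_upwards [hI, ae_mem_gammaSet hI] with x hx hxγ
    have hxc : x - c ≤ s := (sub_le_sub_right hxγ.2 c).trans hs
    have hcφ : c ≤ φ x := le_min hxγ.1 (by linarith)
    refine ⟨hx, ⟨⟨hac.trans hcφ, (min_le_left _ _).trans hx.2⟩, hcφ, min_le_right _ _⟩, ?_⟩
    rw [Real.dist_eq, abs_sub_comm, abs_of_nonneg (sub_nonneg.2 (min_le_left _ _))]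
    have : x - s + t ≤ φ x := le_min (by linarith) (by linarith)
    linarith
  have hmap : ∀ᵐ y ∂μ.map φ, y ∈ Icc a b ∩ Icc c (c + t) :=
    (ae_map_iff hφ.aemeasurable (measurableSet_Icc.inter measurableSet_Icc)).2
      (hmove.mono fun x hx => hx.2.1)
  refine ⟨φ, hφ, .of_ae_mem (hmap.mono fun y hy => hy.1), ?_,
    hmove.mono fun x hx => ⟨hx.1, hx.2.1.1, hx.2.2⟩⟩
  simpa using gammaLen_le_of_ae_mem (hmap.mono fun y hy => hy.2)

end QuasiArithmeticMean

/-- The set whose supremum is `d_{f,g}(t)`. -/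
def qamGaps (f g : ℝ → ℝ) (I : Set ℝ) (t : ℝ) : Set ℝ :=
  {d | ∃ mu : Measure ℝ, IsCSP I mu ∧ gammaLen mu ≤ t ∧ d = |QAM f I mu - QAM g I mu|}

section Gaps

variable {a b : ℝ} {f g : ℝ → ℝ}

theorem qamGaps_nonempty (hab : a ≤ b) {t : ℝ} (ht : 0 ≤ t) :
    (qamGaps f g (Icc a b) t).Nonempty := by
  have hδ : ∀ᵐ x ∂Measure.dirac a, x ∈ Icc a a := by
    simp
  exact ⟨_, _, .of_ae_mem (hδ.mono fun x hx => ⟨hx.1, hx.2.trans hab⟩),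
    (gammaLen_le_of_ae_mem hδ).trans (by simpa using ht), rfl⟩

theorem qamGaps_bddAbove (hf : ContinuousOn f (Icc a b)) (hg : ContinuousOn g (Icc a b))
    (t : ℝ) : BddAbove (qamGaps f g (Icc a b) t) := by
  refine ⟨b - a, ?_⟩
  rintro d ⟨μ, hμ, -, rfl⟩
  exact Real.dist_le_of_mem_Icc (QAM_mem hf hμ) (QAM_mem hg hμ)

theorem monotoneOn_sSup_qamGaps (hab : a ≤ b) (hf : ContinuousOn f (Icc a b))
    (hg : ContinuousOn g (Icc a b)) :
    MonotoneOn (fun t => sSup (qamGaps f g (Icc a b) t)) (Ici 0) := by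
  intro t ht s _ hts
  refine csSup_le_csSup (qamGaps_bddAbove hf hg s) (qamGaps_nonempty hab ht) ?_
  rintro d ⟨μ, hμ, hμt, rfl⟩
  exact ⟨μ, hμ, hμt.trans hts, rfl⟩

theorem sSup_qamGaps_le_add (hab : a ≤ b) (hf : CM f (Icc a b)) (hg : CM g (Icc a b))
    {ε : ℝ} (hε : 0 < ε) :
    ∃ δ > 0, ∀ t s, 0 ≤ t → t ≤ s → s - t < δ →
      sSup (qamGaps f g (Icc a b) s) ≤ sSup (qamGaps f g (Icc a b) t) + ε := by
  obtain ⟨δf, hδf, Hf⟩ := exists_dist_QAM_map_lt hf.1 hf.injOn (half_pos hε)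
  obtain ⟨δg, hδg, Hg⟩ := exists_dist_QAM_map_lt hg.1 hg.injOn (half_pos hε)
  refine ⟨min δf δg, lt_min hδf hδg, fun t s ht hts hst => ?_⟩
  refine csSup_le (qamGaps_nonempty hab (ht.trans hts)) ?_
  rintro d ⟨μ, hμ, hμs, rfl⟩
  have := hμ.1
  obtain ⟨φ, hφ, hν, hνt, hmove⟩ := exists_map_gammaLen_le hμ ht hts hμs
  have hclose : ∀ δ, min δf δg ≤ δ →
      ∀ᵐ x ∂μ, x ∈ Icc a b ∧ φ x ∈ Icc a b ∧ dist (φ x) x < δ := fun δ hδ =>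
    hmove.mono fun x ⟨hx, hφx, hd⟩ => ⟨hx, hφx, hd.trans_lt (hst.trans_le hδ)⟩
  have hfν := abs_sub_lt_iff.1 (Real.dist_eq _ _ ▸ Hf μ φ hφ (hclose δf (min_le_left _ _)))
  have hgν := abs_sub_lt_iff.1 (Real.dist_eq _ _ ▸ Hg μ φ hφ (hclose δg (min_le_right _ _)))
  have hν_le := abs_le.1 <| le_csSup (qamGaps_bddAbove hf.1 hg.1 t) ⟨_, hν, hνt, rfl⟩
  rw [abs_le]
  constructor <;> linarith

end Gaps

theorem stmt2 (a b : ℝ) (hab : a < b) (f g : ℝ → ℝ)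
    (hf : CM f (Icc a b)) (hg : CM g (Icc a b)) :
    ContinuousOn (fun t : ℝ =>
      sSup {d : ℝ | ∃ mu : Measure ℝ, IsCSP (Icc a b) mu ∧ gammaLen mu ≤ t ∧
        d = |QAM f (Icc a b) mu - QAM g (Icc a b) mu|}) (Ioc 0 (b - a)) := by
  show ContinuousOn (fun t => sSup (qamGaps f g (Icc a b) t)) _
  refine (UniformContinuousOn.continuousOn ?_).mono fun t ht => le_of_lt ht.1
  refine (monotoneOn_sSup_qamGaps hab.le hf.1 hg.1).uniformContinuousOn_of_le_add fun ε hε => ?_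
  obtain ⟨δ, hδ, h⟩ := sSup_qamGaps_le_add hab.le hf hg hε
  exact ⟨δ, hδ, fun t ht s _ hts hst => h t s ht hts hst⟩
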